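/- Let $\{\varepsilon_n\}_{n\ge 0}$ be a sequence of positive real numbers satisfying $\varepsilon_n \le \frac{1}{2}(\varepsilon_{n-1}\wedge \varepsilon_{n-1}^2) + C_1 \eta_0^{2^n}$ for all $n\ge 1$, where $0\le \eta_0 < 1$ and $C_1 > 0$. Then there exist constants $0\le \eta_1 < 1$ and $C_2 > 0$, depending only on $\eta_0$, $C_1$, and $\varepsilon_0$, such that $\varepsilon_n \le C_2 \eta_1^{2^n}$ for all $n$. -/

import Mathlib

/-!
While `ε` is large, `min ε ε² ≤ ε` gives the contraction
`ε n ≤ ε (n-1) / 2 + C₁ η₀^(2^n)` with a summable forcing term, so `ε n → 0`.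
Once `ε N ≤ 1/2` and `η₀^(2^N)` is small, `min ε ε² ≤ ε²` takes over and the recursion
squares the error at each step: `ε (N + m) ≤ (1/2)^(2^m)`.
Rescaling the exponent by `2^N` gives `η₁ = (1/2)^(1/2^N)`.
-/

open Filter Topology

lemma tendsto_zero_of_le_mul_add_summable {x u : ℕ → ℝ} {a : ℝ} (ha : a < 1)
    (hx : ∀ n, 0 ≤ x n) (hu0 : ∀ n, 0 ≤ u n) (hu : Summable u)
    (h : ∀ n, x (n + 1) ≤ a * x n + u n) : Tendsto x atTop (𝓝 0) := by
  -- `x` is even summable: telescoping the recursion bounds its partial sums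
  have hpartial : ∀ n, (1 - a) * ∑ k ∈ Finset.range n, x k + x n ≤
      x 0 + ∑ k ∈ Finset.range n, u k := by
    intro n
    induction n with
    | zero => simp
    | succ n ih =>
      rw [Finset.sum_range_succ, Finset.sum_range_succ]
      linarith [h n]
  refine Summable.tendsto_atTop_zero
    (summable_of_sum_range_le (c := (x 0 + ∑' k, u k) / (1 - a)) hx fun n => ?_)
  have hsum_le := hu.sum_le_tsum (Finset.range n) fun k _ => hu0 k
  rw [le_div_iff₀' (sub_pos.mpr ha)]
  linarith [hpartial n, hx n]

lemma le_pow_two_pow_of_le_sq_add {x : ℕ → ℝ} {q : ℝ} (hx : ∀ m, 0 ≤ x m)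
    (h0 : x 0 ≤ q) (h : ∀ m, x (m + 1) ≤ x m ^ 2 / 2 + q ^ 2 ^ (m + 1) / 2) (m : ℕ) :
    x m ≤ q ^ 2 ^ m := by
  induction m with
  | zero => simpa using h0
  | succ m ih =>
    have hsq : x m ^ 2 ≤ q ^ 2 ^ (m + 1) := by
      rw [pow_succ 2 m, pow_mul]
      exact pow_le_pow_left₀ (hx m) ih 2
    linarith [h m]

lemma mul_pow_le_pow_div_two {b c q : ℝ} (hb : 0 ≤ b) (hbq : b ≤ q)
    (hcb : 2 * c * b ≤ q) {k : ℕ} (hk : 1 ≤ k) : c * b ^ k ≤ q ^ k / 2 := by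
  obtain ⟨j, rfl⟩ := Nat.exists_eq_add_of_le' hk
  have hbj : b ^ j ≤ q ^ j := pow_le_pow_left₀ hb hbq j
  calc c * b ^ (j + 1) = c * b * b ^ j := by ring
    _ ≤ q / 2 * q ^ j := mul_le_mul (by linarith) hbj (pow_nonneg hb j) (by linarith)
    _ = q ^ (j + 1) / 2 := by ring

lemma exists_le_mul_pow_two_pow_of_tail {x : ℕ → ℝ} {B q : ℝ} {N : ℕ} (hq0 : 0 < q)
    (hq1 : q < 1) (hB : ∀ n, x n ≤ B) (htail : ∀ m, x (N + m) ≤ q ^ 2 ^ m) :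
    ∃ η C : ℝ, 0 ≤ η ∧ η < 1 ∧ 0 < C ∧ ∀ n, x n ≤ C * η ^ 2 ^ n := by
  set η := q ^ ((2 ^ N : ℕ) : ℝ)⁻¹
  have hη0 : 0 ≤ η := by positivity
  have hη1 : η < 1 := Real.rpow_lt_one hq0.le hq1 (by positivity)
  have hηN : η ^ 2 ^ N = q := Real.rpow_inv_natCast_pow hq0.le (by positivity)
  refine ⟨η, max 1 (B / q), hη0, hη1, by positivity, fun n => ?_⟩
  rcases le_or_gt N n with hNn | hnN
  · obtain ⟨m, rfl⟩ := Nat.exists_eq_add_of_le hNn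
    calc x (N + m) ≤ q ^ 2 ^ m := htail m
      _ = η ^ 2 ^ (N + m) := by rw [pow_add, pow_mul, hηN]
      _ ≤ max 1 (B / q) * η ^ 2 ^ (N + m) :=
        le_mul_of_one_le_left (by positivity) (le_max_left _ _)
  · have hqη : q ≤ η ^ 2 ^ n := hηN ▸
      pow_le_pow_of_le_one hη0 hη1.le (Nat.pow_le_pow_right two_pos hnN.le)
    calc x n ≤ B / q * q := by rw [div_mul_cancel₀ _ hq0.ne']; exact hB n
      _ ≤ max 1 (B / q) * η ^ 2 ^ n :=
        mul_le_mul (le_max_right _ _) hqη hq0.le (by positivity)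

theorem stmt_0 (ε : ℕ → ℝ) (C1 η0 : ℝ)
    (hε : ∀ n, 0 < ε n) (hη0 : 0 ≤ η0) (hη1 : η0 < 1) (hC1 : 0 < C1)
    (hrec : ∀ n : ℕ, 1 ≤ n →
      ε n ≤ (1/2) * min (ε (n-1)) ((ε (n-1))^2) + C1 * η0 ^ (2^n)) :
    ∃ η1 C2 : ℝ, 0 ≤ η1 ∧ η1 < 1 ∧ 0 < C2 ∧ ∀ n, ε n ≤ C2 * η1 ^ (2^n) := by
  have hstep (n : ℕ) : ε (n + 1) ≤ (1/2) * min (ε n) (ε n ^ 2) + C1 * η0 ^ 2 ^ (n + 1) :=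
    hrec (n + 1) n.succ_pos
  have hdom (n : ℕ) : η0 ^ 2 ^ (n + 1) ≤ η0 ^ n :=
    pow_le_pow_of_le_one hη0 hη1.le (Nat.lt_two_pow_self.trans (Nat.pow_lt_pow_right one_lt_two
      n.lt_succ_self)).le
  have hforcing : Summable fun n => C1 * η0 ^ 2 ^ (n + 1) :=
    ((summable_geometric_of_lt_one hη0 hη1).mul_left C1).of_nonneg_of_le (fun n => by positivity)
      fun n => mul_le_mul_of_nonneg_left (hdom n) hC1.le
  have hε_lim : Tendsto ε atTop (𝓝 0) :=
    tendsto_zero_of_le_mul_add_summable (a := 1/2) (by norm_num) (fun n => (hε n).le)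
      (fun n => by positivity) hforcing
      fun n => (hstep n).trans (by gcongr; exact min_le_left _ _)
  have hη_lim : Tendsto (fun n => η0 ^ 2 ^ n) atTop (𝓝 0) :=
    (tendsto_pow_atTop_nhds_zero_of_lt_one hη0 hη1).comp
      (tendsto_pow_atTop_atTop_of_one_lt one_lt_two)
  have hε_ev := hε_lim.eventually (ge_mem_nhds one_half_pos)
  have hη_ev := hη_lim.eventually (ge_mem_nhds one_half_pos)
  have hCη_ev :=
    (hη_lim.const_mul (2 * C1)).eventually (ge_mem_nhds (by simpa using one_half_pos))
  obtain ⟨N, hεN, hηN, hCηN⟩ := (hε_ev.and (hη_ev.and hCη_ev)).exists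
  have htail : ∀ m, ε (N + m) ≤ (1/2 : ℝ) ^ 2 ^ m := by
    refine le_pow_two_pow_of_le_sq_add (fun m => (hε _).le) hεN fun m => ?_
    have hforce := mul_pow_le_pow_div_two (pow_nonneg hη0 (2 ^ N)) hηN
      (by simpa [mul_assoc] using hCηN) (Nat.one_le_two_pow (n := m + 1))
    rw [← pow_mul, ← pow_add, ← add_assoc] at hforce
    show ε (N + m + 1) ≤ _
    linarith [hstep (N + m), min_le_right (ε (N + m)) (ε (N + m) ^ 2)]
  obtain ⟨B, hB⟩ := hε_lim.bddAbove_range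
  exact exists_le_mul_pow_two_pow_of_tail one_half_pos one_half_lt_one
    (fun n => hB ⟨n, rfl⟩) htail
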